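/- One-dimensional truncation lemma: There is a universal constant c > 0 such that the following holds. Let x₁,…,x_n be i.i.d. real random variables from a distribution P with mean μ_P and E[(x − μ_P)²] ≤ σ_P². For 0 < ε ≤ 1/18, define the multiset T = {x_i : |x_i − μ_P| ≤ 3σ_P/√ε} and μ_T = (1/|T|) Σ_{x∈T} x. Then with probability at least 1 − 3exp(−c n ε): (1) |T| ≥ (1−ε)n; (2) |μ_T − μ_P| ≤ σ_P √ε; and (3) (1/|T|) Σ_{x∈T} (x − μ_P)² ≤ 2 σ_P². -/

import Mathlib

open MeasureTheory Matrix
open scoped BigOperators ENNReal NNReal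

noncomputable section

/-- Squared Euclidean norm of a vector in `ℝ^d`. -/
def enormSq {d : ℕ} (x : Fin d → ℝ) : ℝ := ∑ i, x i ^ 2

/-- Euclidean norm of a vector in `ℝ^d`. -/
def euclNorm {d : ℕ} (x : Fin d → ℝ) : ℝ := Real.sqrt (enormSq x)

/-- Frobenius norm of a matrix. -/
def frobNorm {m n : ℕ} (A : Matrix (Fin m) (Fin n) ℝ) : ℝ :=
  Real.sqrt (∑ i, ∑ j, A i j ^ 2)

/-- Spectral norm (ℓ₂ operator norm) of a square matrix. -/
def specNorm {d : ℕ} (A : Matrix (Fin d) (Fin d) ℝ) : ℝ :=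
  ‖Matrix.toEuclideanCLM (𝕜 := ℝ) A‖

theorem Matrix.isHermitian_transpose_mul_self {d : ℕ} (A : Matrix (Fin d) (Fin d) ℝ) :
    (Aᵀ * A).IsHermitian := by
  simpa using Matrix.isHermitian_conjTranspose_mul_self A

/-- Nuclear norm: the sum of the singular values. -/
def nucNorm {d : ℕ} (A : Matrix (Fin d) (Fin d) ℝ) : ℝ :=
  ∑ i, Real.sqrt ((Matrix.isHermitian_transpose_mul_self A).eigenvalues i)

open scoped Classical in
/-- Best rank-`k` approximation of a symmetric matrix: keep the `k` largest eigenvalues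
(ties broken by index) in an eigendecomposition; junk value `0` on non-symmetric input. -/
def Pk {d : ℕ} (k : ℕ) (A : Matrix (Fin d) (Fin d) ℝ) : Matrix (Fin d) (Fin d) ℝ :=
  if hA : A.IsHermitian then
    (hA.eigenvectorUnitary : Matrix (Fin d) (Fin d) ℝ) *
      Matrix.diagonal (fun i =>
        if (Finset.univ.filter fun j =>
              hA.eigenvalues i < hA.eigenvalues j ∨
                (hA.eigenvalues i = hA.eigenvalues j ∧ j < i)).card < k
        then hA.eigenvalues i else 0) *
      star (hA.eigenvectorUnitary : Matrix (Fin d) (Fin d) ℝ)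
  else 0

/-- A `d × k` matrix is semi-orthogonal if `Vᵀ V = I_k`. -/
def IsSemiOrtho {d k : ℕ} (V : Matrix (Fin d) (Fin k) ℝ) : Prop := Vᵀ * V = 1

/-- `U` is a matrix of top-`k` singular vectors of the positive semidefinite matrix `M`:
it is semi-orthogonal and maximizes `Tr(Vᵀ M V)` among semi-orthogonal matrices. -/
def IsTopKSingular {d k : ℕ} (M : Matrix (Fin d) (Fin d) ℝ)
    (U : Matrix (Fin d) (Fin k) ℝ) : Prop :=
  IsSemiOrtho U ∧ ∀ V : Matrix (Fin d) (Fin k) ℝ, IsSemiOrtho V →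
    (Vᵀ * M * V).trace ≤ (Uᵀ * M * U).trace

/-- `s` is an `α`-corruption of the sample `g`: as multisets, `s = (g \ L) ∪ E`
with `L ⊆ g` and `|E| = |L| ≤ α n`. -/
def IsCorruptionOf {V : Type*} (α : ℝ) {n : ℕ} (g s : Fin n → V) : Prop :=
  ∃ L E : Multiset V, L ≤ (List.ofFn g : Multiset V) ∧
    Multiset.card E = Multiset.card L ∧ (Multiset.card L : ℝ) ≤ α * n ∧
    (List.ofFn s : Multiset V) + L = (List.ofFn g : Multiset V) + E

/-- The standard Gaussian measure `N(0, I_d)` on `ℝ^d`. -/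
def stdGaussian (d : ℕ) : Measure (Fin d → ℝ) :=
  Measure.pi fun _ => ProbabilityTheory.gaussianReal 0 1

/-- Total variation distance between two measures. -/
def tvDist {Ω : Type*} [MeasurableSpace Ω] (μ ν : Measure Ω) : ℝ :=
  ⨆ s : Set Ω, |(μ s).toReal - (ν s).toReal|
/-- Matrices over `ℝ` carry the Borel (product) σ-algebra. -/
instance matrixMeasurableSpace {m n : ℕ} : MeasurableSpace (Matrix (Fin m) (Fin n) ℝ) :=
  (inferInstance : MeasurableSpace (Fin m → Fin n → ℝ))

/-!
Write `Y = x - μ_P` and `B = 3σ_P/√ε`. The three conclusions only involve three empirical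
sums over the whole sample: the number of outliers `|Y| > B`, and the sums of `Y` and of `Y²`
over the points with `|Y| ≤ B`. Chebyshev gives `P(|Y| > B) ≤ ε/9`, truncation moves the mean
of `Y` by at most `σ²/B = σ√ε/3`, and the truncated second moment is at most `σ²`. Each
summand `g` is bounded above, so `t g ≤ 1` for a suitable `t` (of order `1`, `√ε/σ`, `ε/σ²`);
then `eᵘ ≤ 1 + u + u²` for `u ≤ 1` gives `E e^{tg} ≤ exp (t E g + t² E g²)`, and a Chernoff
bound shows that each sum (the truncated sum of `Y` in both directions) overshoots a constant
multiple of its expected size with probability at most `exp (-nε/60)`. A union bound over these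
four events and `4e^{-2a} ≤ 3e^{-a}` (when
`3e^{-a} < 1`) finish the proof; if `σ_P = 0`, the sample equals `μ_P` almost surely.
-/

open Real ProbabilityTheory

theorem Real.exp_le_one_add_add_sq {u : ℝ} (hu : u ≤ 1) : exp u ≤ 1 + u + u ^ 2 := by
  rcases le_or_gt (-1) u with h | h
  · have hexp := (abs_sub_le_iff.1 (Real.exp_bound (abs_le.2 ⟨h, hu⟩) (n := 2) two_pos)).1
    norm_num [Finset.sum_range_succ] at hexp
    nlinarith [sq_abs u]
  · nlinarith [exp_le_one_iff.2 (by linarith : u ≤ 0)]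

theorem four_mul_exp_neg_two_mul_le {a : ℝ} (h : 3 * exp (-a) < 1) :
    4 * exp (-(2 * a)) ≤ 3 * exp (-a) := by
  rw [show -(2 * a) = -a + -a by ring, exp_add]
  nlinarith [exp_pos (-a)]

theorem ae_pi_forall_eq_zero_of_integral_sq_le_zero {Ω : Type*} [MeasurableSpace Ω]
    {μ : Measure Ω} [IsProbabilityMeasure μ] {Y : Ω → ℝ}
    (hY2 : Integrable (fun ω => Y ω ^ 2) μ) (h : ∫ ω, Y ω ^ 2 ∂μ ≤ 0) (n : ℕ) :
    ∀ᵐ x ∂(Measure.pi fun _ : Fin n => μ), ∀ i, Y (x i) = 0 := by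
  have hY : ∀ᵐ ω ∂μ, Y ω = 0 := by
    filter_upwards [(integral_eq_zero_iff_of_nonneg (fun ω => sq_nonneg (Y ω)) hY2).1
      (h.antisymm (integral_nonneg fun ω => sq_nonneg (Y ω)))] with ω hω
    simpa using hω
  exact ae_all_iff.2 fun i => (Measure.quasiMeasurePreserving_eval (fun _ => μ) i).ae hY

theorem ofReal_one_sub_le_of_measureReal_compl_le {Ω : Type*} [MeasurableSpace Ω]
    {μ : Measure Ω} [IsProbabilityMeasure μ] {s : Set Ω} {δ : ℝ} (h : μ.real sᶜ ≤ δ) :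
    ENNReal.ofReal (1 - δ) ≤ μ s := by
  have hcover : 1 ≤ μ.real s + μ.real sᶜ := by
    simpa [Set.union_compl_self] using measureReal_union_le (μ := μ) s sᶜ
  rw [← ofReal_measureReal]
  exact ENNReal.ofReal_le_ofReal (by linarith)

namespace ProbabilityTheory

variable {Ω : Type*} [MeasurableSpace Ω] {μ : Measure Ω} [IsProbabilityMeasure μ]
  {g : Ω → ℝ} {t m q : ℝ}

theorem integrable_exp_mul_of_mul_le_one (hg : AEStronglyMeasurable g μ)
    (hbd : ∀ ω, t * g ω ≤ 1) : Integrable (fun ω => exp (t * g ω)) μ :=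
  .of_bound (continuous_exp.comp_aestronglyMeasurable (hg.const_mul t)) (exp 1)
    (.of_forall fun ω => by rw [norm_of_nonneg (exp_pos _).le]; exact exp_le_exp.2 (hbd ω))

theorem mgf_le_exp_of_mul_le_one (hg : MemLp g 2 μ) (ht : 0 ≤ t) (hbd : ∀ ω, t * g ω ≤ 1)
    (hm : μ[g] ≤ m) (hq : ∫ ω, g ω ^ 2 ∂μ ≤ q) : mgf g μ t ≤ exp (t * m + t ^ 2 * q) := by
  have hg1 : Integrable g μ := hg.integrable one_le_two
  have hg2 : Integrable (fun ω => g ω ^ 2) μ := hg.integrable_sq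
  have hlin : Integrable (fun ω => 1 + t * g ω) μ := (integrable_const 1).add (hg1.const_mul t)
  calc mgf g μ t ≤ ∫ ω, (1 + t * g ω + t ^ 2 * g ω ^ 2) ∂μ :=
        integral_mono (integrable_exp_mul_of_mul_le_one hg.1 hbd) (hlin.add (hg2.const_mul _))
          fun ω => by simpa [mul_pow] using exp_le_one_add_add_sq (hbd ω)
    _ = 1 + (t * μ[g] + t ^ 2 * ∫ ω, g ω ^ 2 ∂μ) := by
        rw [integral_add hlin (hg2.const_mul _), integral_add (integrable_const 1)
          (hg1.const_mul t), integral_const_mul, integral_const_mul]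
        simp only [integral_const, probReal_univ, smul_eq_mul, one_mul]
        ring
    _ ≤ 1 + (t * m + t ^ 2 * q) := by gcongr
    _ ≤ exp (t * m + t ^ 2 * q) := by linarith [add_one_le_exp (t * m + t ^ 2 * q)]

theorem measureReal_pi_sum_ge_le_exp {ι : Type*} [Fintype ι] (hg : MemLp g 2 μ) (ht : 0 ≤ t)
    (hbd : ∀ ω, t * g ω ≤ 1) (hm : μ[g] ≤ m) (hq : ∫ ω, g ω ^ 2 ∂μ ≤ q) (s : ℝ) :
    (Measure.pi fun _ : ι => μ).real {x | s ≤ ∑ i, g (x i)} ≤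
      exp (Fintype.card ι * (t * m + t ^ 2 * q) - t * s) := by
  have hexp_sum (x : ι → Ω) : exp (t * ∑ i, g (x i)) = ∏ i, exp (t * g (x i)) := by
    rw [Finset.mul_sum, exp_sum]
  have hmgf : mgf (fun x : ι → Ω => ∑ i, g (x i)) (Measure.pi fun _ => μ) t =
      mgf g μ t ^ Fintype.card ι := by
    simp only [mgf, hexp_sum]
    exact integral_fintype_prod_eq_pow (ι := ι) (μ := μ) fun v => exp (t * g v)
  have hint : Integrable (fun x : ι → Ω => exp (t * ∑ i, g (x i))) (Measure.pi fun _ => μ) := by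
    simp only [hexp_sum]
    exact .fintype_prod (μ := fun _ => μ) fun _ => integrable_exp_mul_of_mul_le_one hg.1 hbd
  calc _ ≤ exp (-t * s) * mgf g μ t ^ Fintype.card ι :=
        hmgf ▸ measure_ge_le_exp_mul_mgf s ht hint
    _ ≤ exp (-t * s) * exp (t * m + t ^ 2 * q) ^ Fintype.card ι := by
        gcongr
        · exact mgf_nonneg
        · exact mgf_le_exp_of_mul_le_one hg ht hbd hm hq
    _ = _ := by rw [← exp_nat_mul, ← exp_add]; ring_nf

end ProbabilityTheory

def truncAt (B v : ℝ) : ℝ := if |v| ≤ B then v else 0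

def outlierInd (B v : ℝ) : ℝ := if |v| ≤ B then 0 else 1

section Pointwise

variable {B v : ℝ}

theorem measurable_truncAt (B : ℝ) : Measurable (truncAt B) :=
  Measurable.ite (measurableSet_le measurable_norm measurable_const) measurable_id
    measurable_const

theorem measurable_outlierInd (B : ℝ) : Measurable (outlierInd B) :=
  Measurable.ite (measurableSet_le measurable_norm measurable_const) measurable_const
    measurable_const

theorem truncAt_neg : truncAt B (-v) = -truncAt B v := by
  unfold truncAt; rw [abs_neg]; split_ifs <;> simp

theorem abs_truncAt_le_abs : |truncAt B v| ≤ |B| := by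
  unfold truncAt; split_ifs with h
  · exact h.trans (le_abs_self B)
  · simp

theorem truncAt_sq_le : truncAt B v ^ 2 ≤ v ^ 2 := by
  unfold truncAt; split_ifs <;> simp [sq_nonneg]

theorem truncAt_sq_le_sq_bound : truncAt B v ^ 2 ≤ B ^ 2 := by
  simpa only [sq_abs] using pow_le_pow_left₀ (abs_nonneg _) (abs_truncAt_le_abs (B := B) (v := v)) 2

theorem abs_sub_truncAt_le (hB : 0 < B) : |v - truncAt B v| ≤ v ^ 2 / B := by
  unfold truncAt; split_ifs with h
  · rw [sub_self, abs_zero]; positivity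
  · rw [sub_zero, le_div_iff₀ hB, ← sq_abs, sq]
    exact mul_le_mul_of_nonneg_left (not_le.1 h).le (abs_nonneg v)

theorem outlierInd_nonneg : 0 ≤ outlierInd B v := by
  unfold outlierInd; split_ifs <;> norm_num

theorem outlierInd_le_one : outlierInd B v ≤ 1 := by
  unfold outlierInd; split_ifs <;> norm_num

theorem outlierInd_sq : outlierInd B v ^ 2 = outlierInd B v := by
  unfold outlierInd; split_ifs <;> norm_num

theorem outlierInd_le_sq_div_sq (hB : 0 < B) : outlierInd B v ≤ v ^ 2 / B ^ 2 := by
  unfold outlierInd; split_ifs with h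
  · positivity
  · rw [le_div_iff₀ (by positivity), one_mul, ← sq_abs v]
    exact pow_le_pow_left₀ hB.le (not_le.1 h).le 2

end Pointwise

section Moments

variable {Ω : Type*} [MeasurableSpace Ω] {μ : Measure Ω} [IsProbabilityMeasure μ]
  {Y : Ω → ℝ} {B : ℝ}

theorem MeasureTheory.AEStronglyMeasurable.memLp_outlierInd_comp
    (hY : AEStronglyMeasurable Y μ) (B : ℝ) (p : ℝ≥0∞) :
    MemLp (fun ω => outlierInd B (Y ω)) p μ :=
  .of_bound ((measurable_outlierInd B).comp_aemeasurable hY.aemeasurable).aestronglyMeasurable 1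
    (.of_forall fun _ => by
      rw [Real.norm_of_nonneg outlierInd_nonneg]; exact outlierInd_le_one)

theorem MeasureTheory.AEStronglyMeasurable.memLp_truncAt_comp
    (hY : AEStronglyMeasurable Y μ) (B : ℝ) (p : ℝ≥0∞) :
    MemLp (fun ω => truncAt B (Y ω)) p μ :=
  .of_bound ((measurable_truncAt B).comp_aemeasurable hY.aemeasurable).aestronglyMeasurable |B|
    (.of_forall fun _ => abs_truncAt_le_abs)

theorem MeasureTheory.AEStronglyMeasurable.memLp_truncAt_sq_comp
    (hY : AEStronglyMeasurable Y μ) (B : ℝ) (p : ℝ≥0∞) :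
    MemLp (fun ω => truncAt B (Y ω) ^ 2) p μ :=
  .of_bound (((measurable_truncAt B).comp_aemeasurable hY.aemeasurable).pow_const 2
    |>.aestronglyMeasurable) (B ^ 2) (.of_forall fun _ => by
      rw [Real.norm_of_nonneg (sq_nonneg _)]; exact truncAt_sq_le_sq_bound)

theorem integral_outlierInd_le (hY : MemLp Y 2 μ) (hB : 0 < B) :
    ∫ ω, outlierInd B (Y ω) ∂μ ≤ (∫ ω, Y ω ^ 2 ∂μ) / B ^ 2 := by
  rw [← integral_div]
  exact integral_mono (hY.1.memLp_outlierInd_comp B 1 |>.integrable le_rfl)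
    (hY.integrable_sq.div_const _) fun _ => outlierInd_le_sq_div_sq hB

theorem abs_integral_truncAt_le (hY : MemLp Y 2 μ) (hY0 : μ[Y] = 0) (hB : 0 < B) :
    |∫ ω, truncAt B (Y ω) ∂μ| ≤ (∫ ω, Y ω ^ 2 ∂μ) / B := by
  have hZ : Integrable (fun ω => truncAt B (Y ω)) μ :=
    hY.1.memLp_truncAt_comp B 1 |>.integrable le_rfl
  have hdiff : ∫ ω, truncAt B (Y ω) ∂μ = -∫ ω, (Y ω - truncAt B (Y ω)) ∂μ := by
    rw [integral_sub (hY.integrable one_le_two) hZ, hY0]; ring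
  rw [hdiff, abs_neg, ← integral_div]
  exact (abs_integral_le_integral_abs).trans <| integral_mono
    ((hY.integrable one_le_two).sub hZ).abs (hY.integrable_sq.div_const _)
    fun _ => abs_sub_truncAt_le hB

theorem integral_truncAt_sq_le (hY : MemLp Y 2 μ) :
    ∫ ω, truncAt B (Y ω) ^ 2 ∂μ ≤ ∫ ω, Y ω ^ 2 ∂μ :=
  integral_mono (hY.1.memLp_truncAt_sq_comp B 1 |>.integrable le_rfl) hY.integrable_sq
    fun _ => truncAt_sq_le

theorem integral_truncAt_sq_sq_le (hY : MemLp Y 2 μ) :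
    ∫ ω, (truncAt B (Y ω) ^ 2) ^ 2 ∂μ ≤ B ^ 2 * ∫ ω, Y ω ^ 2 ∂μ := by
  rw [← integral_const_mul]
  refine integral_mono (hY.1.memLp_truncAt_sq_comp B 2).integrable_sq
    (hY.integrable_sq.const_mul _) fun ω => ?_
  rw [sq (truncAt B (Y ω) ^ 2)]
  exact mul_le_mul truncAt_sq_le_sq_bound truncAt_sq_le (sq_nonneg _) (sq_nonneg _)

end Moments

section Tails

variable {Ω : Type*} [MeasurableSpace Ω] {μ : Measure Ω} [IsProbabilityMeasure μ]
  {Y : Ω → ℝ} {σ ε : ℝ}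

theorem measureReal_pi_sum_outlierInd_ge_le (hY : MemLp Y 2 μ) (hvar : ∫ ω, Y ω ^ 2 ∂μ ≤ σ ^ 2)
    (hσ : 0 < σ) (hε : 0 < ε) (n : ℕ) :
    (Measure.pi fun _ : Fin n => μ).real
        {x | ε * n ≤ ∑ i, outlierInd (3 * σ / √ε) (Y (x i))} ≤ exp (-(n * ε / 60)) := by
  have hmean : ∫ ω, outlierInd (3 * σ / √ε) (Y ω) ∂μ ≤ ε / 9 := by
    refine (integral_outlierInd_le hY (by positivity)).trans ?_
    calc _ ≤ σ ^ 2 / (3 * σ / √ε) ^ 2 := by gcongr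
      _ = ε / 9 := by rw [div_pow, Real.sq_sqrt hε.le]; field_simp; ring
  refine (measureReal_pi_sum_ge_le_exp (hY.1.memLp_outlierInd_comp _ 2) zero_le_one
    (fun _ => by simpa using outlierInd_le_one) hmean
    (by simpa [outlierInd_sq] using hmean) _).trans ?_
  rw [Fintype.card_fin]
  exact exp_le_exp.2 (by linarith [mul_nonneg n.cast_nonneg hε.le])

theorem measureReal_pi_sum_truncAt_ge_le (hY : MemLp Y 2 μ) (hY0 : μ[Y] = 0)
    (hvar : ∫ ω, Y ω ^ 2 ∂μ ≤ σ ^ 2) (hσ : 0 < σ) (hε : 0 < ε) (n : ℕ) :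
    (Measure.pi fun _ : Fin n => μ).real
        {x | 5 / 6 * σ * √ε * n ≤ ∑ i, truncAt (3 * σ / √ε) (Y (x i))} ≤
      exp (-(n * ε / 60)) := by
  have hsε : 0 < √ε := Real.sqrt_pos.2 hε
  have hsq : √ε ^ 2 = ε := Real.sq_sqrt hε.le
  have hB : 0 < 3 * σ / √ε := by positivity
  have hmean : ∫ ω, truncAt (3 * σ / √ε) (Y ω) ∂μ ≤ σ * √ε / 3 :=
    calc _ ≤ |∫ ω, truncAt (3 * σ / √ε) (Y ω) ∂μ| := le_abs_self _
      _ ≤ (∫ ω, Y ω ^ 2 ∂μ) / (3 * σ / √ε) := abs_integral_truncAt_le hY hY0 hB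
      _ ≤ σ ^ 2 / (3 * σ / √ε) := by gcongr
      _ = σ * √ε / 3 := by field_simp
  have hbd (v : ℝ) : √ε / (4 * σ) * truncAt (3 * σ / √ε) v ≤ 1 :=
    calc _ ≤ √ε / (4 * σ) * (3 * σ / √ε) := by
          gcongr
          exact (le_abs_self _).trans (abs_truncAt_le_abs.trans_eq (abs_of_pos hB))
      _ ≤ 1 := by field_simp; norm_num
  refine (measureReal_pi_sum_ge_le_exp (hY.1.memLp_truncAt_comp _ 2) (by positivity)
    (fun ω => hbd (Y ω)) hmean ((integral_truncAt_sq_le hY).trans hvar) _).trans ?_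
  have hexp : (n : ℝ) * (√ε / (4 * σ) * (σ * √ε / 3) + (√ε / (4 * σ)) ^ 2 * σ ^ 2) -
      √ε / (4 * σ) * (5 / 6 * σ * √ε * n) = -(n * ε / 16) := by
    field_simp; rw [hsq]; ring
  rw [Fintype.card_fin, hexp]
  exact exp_le_exp.2 (by linarith [mul_nonneg n.cast_nonneg hε.le])

theorem measureReal_pi_sum_truncAt_sq_ge_le (hY : MemLp Y 2 μ)
    (hvar : ∫ ω, Y ω ^ 2 ∂μ ≤ σ ^ 2) (hσ : 0 < σ) (hε : 0 < ε) (n : ℕ) :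
    (Measure.pi fun _ : Fin n => μ).real
        {x | 17 / 9 * σ ^ 2 * n ≤ ∑ i, truncAt (3 * σ / √ε) (Y (x i)) ^ 2} ≤
      exp (-(n * ε / 60)) := by
  have hsq : √ε ^ 2 = ε := Real.sq_sqrt hε.le
  have hbd (v : ℝ) : ε / (20 * σ ^ 2) * truncAt (3 * σ / √ε) v ^ 2 ≤ 1 :=
    calc _ ≤ ε / (20 * σ ^ 2) * (3 * σ / √ε) ^ 2 :=
          mul_le_mul_of_nonneg_left truncAt_sq_le_sq_bound (by positivity)
      _ ≤ 1 := by rw [div_pow (3 * σ), hsq]; field_simp; norm_num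
  have hvar4 : ∫ ω, (truncAt (3 * σ / √ε) (Y ω) ^ 2) ^ 2 ∂μ ≤ (3 * σ / √ε) ^ 2 * σ ^ 2 :=
    (integral_truncAt_sq_sq_le hY).trans (by gcongr)
  refine (measureReal_pi_sum_ge_le_exp (hY.1.memLp_truncAt_sq_comp _ 2) (by positivity)
    (fun ω => hbd (Y ω)) ((integral_truncAt_sq_le hY).trans hvar) hvar4 _).trans ?_
  have hexp : (n : ℝ) * (ε / (20 * σ ^ 2) * σ ^ 2 +
      (ε / (20 * σ ^ 2)) ^ 2 * ((3 * σ / √ε) ^ 2 * σ ^ 2)) -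
      ε / (20 * σ ^ 2) * (17 / 9 * σ ^ 2 * n) = -(n * ε * 79 / 3600) := by
    rw [div_pow (3 * σ), hsq]; field_simp; ring
  rw [Fintype.card_fin, hexp]
  exact exp_le_exp.2 (by linarith [mul_nonneg n.cast_nonneg hε.le])

end Tails

section Samples

variable {ι : Type*} [Fintype ι] {y : ι → ℝ} {T : Finset ι} {B : ℝ}

theorem sum_truncAt_eq (hT : ∀ i, i ∈ T ↔ |y i| ≤ B) :
    ∑ i, truncAt B (y i) = ∑ i ∈ T, y i := by
  classical
  simp only [truncAt, ← hT, Finset.sum_ite_mem, Finset.univ_inter]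

theorem sum_truncAt_sq_eq (hT : ∀ i, i ∈ T ↔ |y i| ≤ B) :
    ∑ i, truncAt B (y i) ^ 2 = ∑ i ∈ T, y i ^ 2 := by
  classical
  simp only [truncAt, ← hT, ite_pow, ne_eq, OfNat.ofNat_ne_zero, not_false_eq_true, zero_pow,
    Finset.sum_ite_mem, Finset.univ_inter]

theorem sum_outlierInd_eq (hT : ∀ i, i ∈ T ↔ |y i| ≤ B) :
    ∑ i, outlierInd B (y i) = Fintype.card ι - T.card := by
  classical
  simp only [outlierInd, ← hT]
  simp [Finset.sum_ite, Finset.filter_not, Finset.card_sdiff,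
    Nat.cast_sub (Finset.card_le_univ T)]

end Samples

section Typical

variable {n : ℕ} {σ ε : ℝ}

/-- The thresholds leave room for `#T ≥ (1 - ε) n ≥ 17 n / 18`: `5/6 ≤ 17/18` for the mean, and
`17/9 = 2 · 17/18` for the second moment. -/
def IsTruncationTypical (n : ℕ) (σ ε : ℝ) (y : Fin n → ℝ) : Prop :=
  ∑ i, outlierInd (3 * σ / √ε) (y i) ≤ ε * n ∧
    |∑ i, truncAt (3 * σ / √ε) (y i)| ≤ 5 / 6 * σ * √ε * n ∧
    ∑ i, truncAt (3 * σ / √ε) (y i) ^ 2 ≤ 17 / 9 * σ ^ 2 * n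

theorem IsTruncationTypical.truncated_sample_bounds {x : Fin n → ℝ} {μ : ℝ}
    (hx : IsTruncationTypical n σ ε fun i => x i - μ) (hn : 0 < n) (hε18 : ε ≤ 1 / 18)
    (T : Finset (Fin n)) (hT : ∀ i, i ∈ T ↔ |x i - μ| ≤ 3 * σ / √ε) :
    (1 - ε) * n ≤ (T.card : ℝ) ∧
      |(T.card : ℝ)⁻¹ * ∑ i ∈ T, x i - μ| ≤ σ * √ε ∧
      (T.card : ℝ)⁻¹ * ∑ i ∈ T, (x i - μ) ^ 2 ≤ 2 * σ ^ 2 := by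
  obtain ⟨hW, hZ, hY⟩ := hx
  rw [sum_outlierInd_eq hT, Fintype.card_fin] at hW
  rw [sum_truncAt_eq hT] at hZ
  rw [sum_truncAt_sq_eq hT] at hY
  have hn_pos : (0 : ℝ) < n := Nat.cast_pos.2 hn
  have hcard : (1 - ε) * n ≤ (T.card : ℝ) := by linarith
  have hcard_large : 17 / 18 * (n : ℝ) ≤ T.card := by nlinarith
  have hT0 : (0 : ℝ) < T.card := by linarith
  have hσε : 0 ≤ σ * √ε := by nlinarith [abs_nonneg (∑ i ∈ T, (x i - μ))]
  refine ⟨hcard, ?_, ?_⟩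
  · have hmean : (T.card : ℝ)⁻¹ * ∑ i ∈ T, x i - μ = (T.card : ℝ)⁻¹ * ∑ i ∈ T, (x i - μ) := by
      rw [Finset.sum_sub_distrib, Finset.sum_const, nsmul_eq_mul]; field_simp
    rw [hmean, abs_mul, abs_inv, abs_of_pos hT0, inv_mul_le_iff₀ hT0]
    nlinarith
  · rw [inv_mul_le_iff₀ hT0]
    nlinarith

end Typical

section Concentration

variable {Ω : Type*} [MeasurableSpace Ω] {μ : Measure Ω} [IsProbabilityMeasure μ]
  {Y : Ω → ℝ} {σ ε : ℝ}

theorem measureReal_pi_not_isTruncationTypical_le (hY : MemLp Y 2 μ) (hY0 : μ[Y] = 0)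
    (hvar : ∫ ω, Y ω ^ 2 ∂μ ≤ σ ^ 2) (hσ : 0 < σ) (hε : 0 < ε) (n : ℕ) :
    (Measure.pi fun _ : Fin n => μ).real
        {x | ¬IsTruncationTypical n σ ε fun i => Y (x i)} ≤ 4 * exp (-(n * ε / 60)) := by
  have hlower := measureReal_pi_sum_truncAt_ge_le hY.neg (by simp [integral_neg, hY0])
    (by simpa using hvar) hσ hε n
  simp only [Pi.neg_apply, truncAt_neg, Finset.sum_neg_distrib] at hlower
  have hcover : {x : Fin n → Ω | ¬IsTruncationTypical n σ ε fun i => Y (x i)} ⊆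
      (({x | ε * n ≤ ∑ i, outlierInd (3 * σ / √ε) (Y (x i))} ∪
        {x | 5 / 6 * σ * √ε * n ≤ ∑ i, truncAt (3 * σ / √ε) (Y (x i))}) ∪
        {x | 5 / 6 * σ * √ε * n ≤ -∑ i, truncAt (3 * σ / √ε) (Y (x i))}) ∪
        {x | 17 / 9 * σ ^ 2 * n ≤ ∑ i, truncAt (3 * σ / √ε) (Y (x i)) ^ 2} := by
    intro x hx
    simp only [IsTruncationTypical, not_and_or, not_le, lt_abs] at hx
    simp only [Set.mem_union, Set.mem_ofPred_eq]
    rcases hx with h | (h | h) | h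
    exacts [.inl (.inl (.inl h.le)), .inl (.inl (.inr h.le)), .inl (.inr h.le), .inr h.le]
  refine (measureReal_mono hcover).trans ?_
  grw [measureReal_union_le, measureReal_union_le, measureReal_union_le,
    measureReal_pi_sum_outlierInd_ge_le hY hvar hσ hε n,
    measureReal_pi_sum_truncAt_ge_le hY hY0 hvar hσ hε n, hlower,
    measureReal_pi_sum_truncAt_sq_ge_le hY hvar hσ hε n]
  linarith

end Concentration

/-- **One-dimensional truncation lemma.** For i.i.d. samples from a distribution with
mean `μP` and second central moment at most `σP²`, the sub-sample `T` obtained by keeping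
points within `3σP/√ε` of `μP` has, with probability at least `1 − 3 exp(−c n ε)`,
cardinality at least `(1 − ε)n`, mean within `σP √ε` of `μP`, and second central moment
(around `μP`) at most `2 σP²`. -/
theorem one_dim_truncation :
    ∃ c : ℝ, 0 < c ∧
      ∀ (n : ℕ) (P : Measure ℝ) [IsProbabilityMeasure P], ∀ (μP σP ε : ℝ),
        0 ≤ σP → 0 < ε → ε ≤ 1 / 18 →
        Integrable (fun x : ℝ => x) P → (∫ x, x ∂P) = μP →
        Integrable (fun x : ℝ => (x - μP) ^ 2) P →
        (∫ x, (x - μP) ^ 2 ∂P) ≤ σP ^ 2 →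
        ENNReal.ofReal (1 - 3 * Real.exp (-(c * n * ε))) ≤
          (Measure.pi fun _ : Fin n => P)
            {x | ∀ T : Finset (Fin n),
                (∀ i, i ∈ T ↔ |x i - μP| ≤ 3 * σP / Real.sqrt ε) →
                (1 - ε) * n ≤ (T.card : ℝ) ∧
                |(T.card : ℝ)⁻¹ * ∑ i ∈ T, x i - μP| ≤ σP * Real.sqrt ε ∧
                (T.card : ℝ)⁻¹ * ∑ i ∈ T, (x i - μP) ^ 2 ≤ 2 * σP ^ 2} := by
  refine ⟨1 / 120, by norm_num, fun n P _ μP σP ε hσ hε hε18 hint hmean hint2 hvar => ?_⟩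
  obtain hδ | hδ := le_or_gt 1 (3 * exp (-(1 / 120 * n * ε)))
  · rw [ENNReal.ofReal_of_nonpos (sub_nonpos.2 hδ)]
    exact zero_le
  have hn : 0 < n := Nat.pos_of_ne_zero fun h => by norm_num [h] at hδ
  have hY : MemLp (fun v => v - μP) 2 P :=
    (memLp_two_iff_integrable_sq (by fun_prop)).2 hint2
  have hY0 : ∫ v, (v - μP) ∂P = 0 := by
    rw [integral_sub hint (integrable_const _), hmean]; simp
  refine ofReal_one_sub_le_of_measureReal_compl_le ((measureReal_mono
    (s₂ := {x | ¬IsTruncationTypical n σP ε fun i => x i - μP}) ?_).trans ?_)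
  · exact fun x hx htypical => hx fun T hT => htypical.truncated_sample_bounds hn hε18 T hT
  obtain rfl | hσ := hσ.eq_or_lt
  · have htypical : ∀ᵐ x ∂(Measure.pi fun _ : Fin n => P),
        IsTruncationTypical n 0 ε fun i => x i - μP := by
      filter_upwards [ae_pi_forall_eq_zero_of_integral_sq_le_zero hint2 (by simpa using hvar) n]
        with x hx
      simp [IsTruncationTypical, hx, outlierInd, truncAt, mul_nonneg hε.le n.cast_nonneg]
    rw [measureReal_def, ae_iff.1 htypical, ENNReal.toReal_zero]
    positivity
  · refine (measureReal_pi_not_isTruncationTypical_le hY hY0 hvar hσ hε n).trans ?_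
    rw [show (n : ℝ) * ε / 60 = 2 * (1 / 120 * n * ε) by ring]
    exact four_mul_exp_neg_two_mul_le hδ

end
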